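/- Under the standing assumptions on φ and φ_λ: for every sequence λ_k → 0⁺ and every sequence x_k converging strongly to x in H, limsup_{k→∞} φ_{λ_k}(x_k) ≤ φ(x). (Theorem 3.1(b), strong convergence case.) -/

import Mathlib

open Filter Topology MeasureTheory

/-- The Moreau envelope of a function `S : H × E → ℝ` (in two arguments) with parameter
`lam`, for the Hilbert norm of the product. -/
noncomputable def moreauEnv2 {H E : Type*} [NormedAddCommGroup H] [InnerProductSpace ℝ H]
    [NormedAddCommGroup E] [InnerProductSpace ℝ E]
    (S : H → E → ℝ) (lam : ℝ) (x : H) (z : E) : ℝ :=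
  ⨅ u : H × E, (S u.1 u.2 + (‖x - u.1‖ ^ 2 + ‖z - u.2‖ ^ 2) / (2 * lam))

/-- Weak (sequential) convergence in a Hilbert space: `⟪x_k, y⟫ → ⟪x₀, y⟫` for every `y`. -/
def WeakSeqTendsto {H : Type*} [NormedAddCommGroup H] [InnerProductSpace ℝ H]
    (x : ℕ → H) (x₀ : H) : Prop :=
  ∀ y : H, Tendsto (fun k => (inner ℝ (x k) y : ℝ)) atTop (𝓝 (inner ℝ x₀ y))

/-!
The supremum `S` of the continuous convex scalarizations is convex and lower semicontinuous, hence
bounded below by a continuous affine function `ℓ + c`. This minorant keeps the Moreau envelopes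
finite and measurable, and it forces every `u` with `S u + ‖w - u‖² / (2λ) ≤ a` to lie within
`O(√λ)` of `w`. Hence, by lower semicontinuity, `a < S (x₀, z)` implies
`a ≤ M_{λ_k} S (x_k, z)` for all large `k`: a sample lying in infinitely many of the events
`{M_{λ_k} S (x_k, ξ) ≤ h (x_k)}` lies in `{S (x₀, ξ) ≤ h x₀}`, and the reverse Fatou inequality
for sets bounds the limsup of their probabilities.
-/

lemma norm_sq_le_norm_fst_sq_add_norm_snd_sq {α β : Type*} [SeminormedAddCommGroup α]
    [SeminormedAddCommGroup β] (p : α × β) : ‖p‖ ^ 2 ≤ ‖p.1‖ ^ 2 + ‖p.2‖ ^ 2 := by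
  rw [Prod.norm_def]
  rcases max_cases ‖p.1‖ ‖p.2‖ with ⟨hmax, -⟩ | ⟨hmax, -⟩ <;> rw [hmax] <;>
    nlinarith [sq_nonneg ‖p.1‖, sq_nonneg ‖p.2‖]

section MoreauTerm

variable {H E : Type*} [NormedAddCommGroup H] [NormedSpace ℝ H]
  [NormedAddCommGroup E] [NormedSpace ℝ E]
  {S : H → E → ℝ} {ℓ : H × E →L[ℝ] ℝ} {c lam : ℝ}

lemma moreau_term_ge (hmin : ∀ u : H × E, ℓ u + c ≤ S u.1 u.2) (hlam : 0 < lam) (w u : H × E) :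
    ℓ w + c - ‖ℓ‖ * ‖w - u‖ + ‖w - u‖ ^ 2 / (2 * lam) ≤
      S u.1 u.2 + (‖w.1 - u.1‖ ^ 2 + ‖w.2 - u.2‖ ^ 2) / (2 * lam) := by
  have hℓ : ℓ w - ℓ u ≤ ‖ℓ‖ * ‖w - u‖ := by
    rw [← map_sub]; exact (le_abs_self _).trans (ℓ.le_opNorm (w - u))
  have hsq : ‖w - u‖ ^ 2 / (2 * lam) ≤ (‖w.1 - u.1‖ ^ 2 + ‖w.2 - u.2‖ ^ 2) / (2 * lam) := by
    gcongr; exact norm_sq_le_norm_fst_sq_add_norm_snd_sq (w - u)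
  linarith [hmin u]

lemma bddBelow_range_moreau_term (hmin : ∀ u : H × E, ℓ u + c ≤ S u.1 u.2) (hlam : 0 < lam)
    (w : H × E) :
    BddBelow (Set.range fun u : H × E =>
      S u.1 u.2 + (‖w.1 - u.1‖ ^ 2 + ‖w.2 - u.2‖ ^ 2) / (2 * lam)) := by
  refine ⟨ℓ w + c - lam * ‖ℓ‖ ^ 2 / 2, ?_⟩
  rintro _ ⟨u, rfl⟩
  have hquad : ‖ℓ‖ * ‖w - u‖ - ‖w - u‖ ^ 2 / (2 * lam) ≤ lam * ‖ℓ‖ ^ 2 / 2 := by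
    have : (‖w - u‖ - lam * ‖ℓ‖) ^ 2 / (2 * lam) =
        lam * ‖ℓ‖ ^ 2 / 2 - (‖ℓ‖ * ‖w - u‖ - ‖w - u‖ ^ 2 / (2 * lam)) := by
      field_simp; ring
    linarith [show 0 ≤ (‖w - u‖ - lam * ‖ℓ‖) ^ 2 / (2 * lam) by positivity]
  linarith [moreau_term_ge hmin hlam w u]

lemma norm_sub_sq_le_of_moreau_term_le (hmin : ∀ u : H × E, ℓ u + c ≤ S u.1 u.2)
    (hlam : 0 < lam) {w u : H × E} {M : ℝ}
    (hM : S u.1 u.2 + (‖w.1 - u.1‖ ^ 2 + ‖w.2 - u.2‖ ^ 2) / (2 * lam) ≤ M) :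
    ‖w - u‖ ^ 2 ≤ 4 * lam * (M - ℓ w - c) + 4 * lam ^ 2 * ‖ℓ‖ ^ 2 := by
  have h := (moreau_term_ge hmin hlam w u).trans hM
  have h' : ‖w - u‖ ^ 2 / (2 * lam) ≤ M - ℓ w - c + ‖ℓ‖ * ‖w - u‖ := by linarith
  rw [div_le_iff₀ (by positivity)] at h'
  nlinarith [sq_nonneg (‖w - u‖ - 2 * lam * ‖ℓ‖)]

end MoreauTerm

section MoreauEnvelope

variable {H E : Type*} [NormedAddCommGroup H] [InnerProductSpace ℝ H]
  [NormedAddCommGroup E] [InnerProductSpace ℝ E]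
  {S : H → E → ℝ} {ℓ : H × E →L[ℝ] ℝ} {c : ℝ}

lemma measurable_moreauEnv2 [MeasurableSpace E] [OpensMeasurableSpace E]
    (hmin : ∀ u : H × E, ℓ u + c ≤ S u.1 u.2) {lam : ℝ} (hlam : 0 < lam) (x : H) :
    Measurable (moreauEnv2 S lam x) :=
  UpperSemicontinuous.measurable <| upperSemicontinuous_ciInf
    (fun z => bddBelow_range_moreau_term hmin hlam (x, z))
    fun _ => Continuous.upperSemicontinuous (by fun_prop)

variable {lam : ℕ → ℝ} {w : ℕ → H × E} {w₀ : H × E}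

lemma eventually_le_moreauEnv2 (hS : LowerSemicontinuous fun u : H × E => S u.1 u.2)
    (hmin : ∀ u : H × E, ℓ u + c ≤ S u.1 u.2) (hpos : ∀ k, 0 < lam k)
    (hlam : Tendsto lam atTop (𝓝 0)) (hw : Tendsto w atTop (𝓝 w₀))
    {a : ℝ} (ha : a < S w₀.1 w₀.2) :
    ∀ᶠ k in atTop, a ≤ moreauEnv2 S (lam k) (w k).1 (w k).2 := by
  obtain ⟨r, hr, hball⟩ := Metric.eventually_nhds_iff.1 (hS w₀ a ha)
  have hbound : Tendsto (fun k => 4 * lam k * (a - ℓ (w k) - c) + 4 * lam k ^ 2 * ‖ℓ‖ ^ 2)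
      atTop (𝓝 0) := by
    simpa using ((hlam.const_mul 4).mul (((ℓ.continuous.tendsto w₀).comp hw).const_sub a
      |>.sub_const c)).add (((hlam.pow 2).const_mul 4).mul_const (‖ℓ‖ ^ 2))
  filter_upwards [hbound.eventually (gt_mem_nhds (by positivity : (0 : ℝ) < (r / 2) ^ 2)),
    hw.eventually (Metric.ball_mem_nhds w₀ (half_pos hr))] with k hk hwk
  refine le_ciInf fun u => ?_
  by_contra! hlt
  have hclose : ‖w k - u‖ < r / 2 :=
    abs_lt_of_sq_lt_sq' ((norm_sub_sq_le_of_moreau_term_le hmin (hpos k) hlt.le).trans_lt hk)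
      (by positivity) |>.2
  have hu : dist u w₀ < r := by
    calc dist u w₀ ≤ dist u (w k) + dist (w k) w₀ := dist_triangle _ _ _
      _ < r / 2 + r / 2 := by
        rw [dist_comm, dist_eq_norm]; exact add_lt_add hclose hwk
      _ = r := add_halves r
  have hpen : 0 ≤ (‖(w k).1 - u.1‖ ^ 2 + ‖(w k).2 - u.2‖ ^ 2) / (2 * lam k) := by
    have := hpos k; positivity
  linarith [hball hu]

lemma le_of_frequently_moreauEnv2_le (hS : LowerSemicontinuous fun u : H × E => S u.1 u.2)
    (hmin : ∀ u : H × E, ℓ u + c ≤ S u.1 u.2) (hpos : ∀ k, 0 < lam k)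
    (hlam : Tendsto lam atTop (𝓝 0)) (hw : Tendsto w atTop (𝓝 w₀))
    {t : ℕ → ℝ} {t₀ : ℝ} (ht : Tendsto t atTop (𝓝 t₀))
    (hfreq : ∃ᶠ k in atTop, moreauEnv2 S (lam k) (w k).1 (w k).2 ≤ t k) :
    S w₀.1 w₀.2 ≤ t₀ := by
  by_contra! hlt
  obtain ⟨a, ht₀a, ha⟩ := exists_between hlt
  obtain ⟨k, hk, hak, htk⟩ := (hfreq.and_eventually ((eventually_le_moreauEnv2 hS hmin hpos hlam
    hw ha).and (ht.eventually (gt_mem_nhds ht₀a)))).exists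
  linarith

end MoreauEnvelope

lemma limsup_toReal_measure_le_measure_limsup {Ω : Type*} [MeasurableSpace Ω] (μ : Measure Ω)
    [IsFiniteMeasure μ] {A : ℕ → Set Ω} (hA : ∀ k, MeasurableSet (A k)) :
    limsup (fun k => (μ (A k)).toReal) atTop ≤ (μ (limsup A atTop)).toReal := by
  set U : ℕ → Set Ω := fun n => ⋃ k ≥ n, A k
  have hU : limsup A atTop = ⋂ n, U n := by simp [U, limsup_eq_iInf_iSup_of_nat]
  have hUmeas (n : ℕ) : MeasurableSet (U n) := .biUnion (Set.to_countable _) fun k _ => hA k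
  have hanti : Antitone U := fun a b hab => Set.biUnion_mono (fun k hk => le_trans hab hk)
    fun _ _ => le_rfl
  have htends : Tendsto (fun n => (μ (U n)).toReal) atTop (𝓝 (μ (⋂ n, U n)).toReal) :=
    (ENNReal.tendsto_toReal (measure_ne_top μ _)).comp
      (tendsto_measure_iInter_atTop (fun n => (hUmeas n).nullMeasurableSet) hanti
        ⟨0, measure_ne_top μ _⟩)
  rw [hU]
  refine ge_of_tendsto' htends fun n => limsup_le_of_le ?_ ?_
  · exact isCoboundedUnder_le_of_le atTop fun k => ENNReal.toReal_nonneg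
  · filter_upwards [eventually_ge_atTop n] with k hk
    exact ENNReal.toReal_mono (measure_ne_top μ _) (measure_mono (Set.subset_biUnion_of_mem hk))

lemma convexOn_ciSup {ι E : Type*} [Nonempty ι] [AddCommMonoid E] [Module ℝ E] {s : Set E}
    {f : ι → E → ℝ} (hf : ∀ i, ConvexOn ℝ s (f i))
    (hbdd : ∀ x ∈ s, BddAbove (Set.range fun i => f i x)) :
    ConvexOn ℝ s fun x => ⨆ i, f i x := by
  refine ⟨(hf (Classical.arbitrary ι)).1, fun x hx y hy a b ha hb hab => ciSup_le fun i => ?_⟩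
  simp only [smul_eq_mul]
  calc f i (a • x + b • y) ≤ a * f i x + b * f i y := (hf i).2 hx hy ha hb hab
    _ ≤ a * (⨆ j, f j x) + b * ⨆ j, f j y := by
      gcongr
      exacts [le_ciSup (hbdd x hx) i, le_ciSup (hbdd y hy) i]

lemma ConvexOn.exists_continuousLinearMap_add_le {W : Type*} [NormedAddCommGroup W]
    [NormedSpace ℝ W] {f : W → ℝ} (hf : ConvexOn ℝ Set.univ f) (hlsc : LowerSemicontinuous f) :
    ∃ (ℓ : W →L[ℝ] ℝ) (c : ℝ), ∀ u, ℓ u + c ≤ f u := by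
  obtain ⟨ℓ, c, hle, -⟩ := hf.exists_affine_le_of_lt (𝕜 := ℝ) (Set.mem_univ 0)
    (sub_one_lt (f 0)) isClosed_univ (hlsc.lowerSemicontinuousOn _)
  exact ⟨ℓ, c, fun u => by simpa using hle ⟨u, Set.mem_univ u⟩⟩

theorem stmt5_general
    {H Y : Type*} [NormedAddCommGroup H] [InnerProductSpace ℝ H]
    [NormedAddCommGroup Y] [NormedSpace ℝ Y] {m : ℕ}
    {Ω : Type*} [MeasurableSpace Ω] (P : Measure Ω) [IsProbabilityMeasure P]
    (ξ : Ω → EuclideanSpace ℝ (Fin m)) (hξ : Measurable ξ)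
    (C : Set (WeakDual ℝ Y)) (hCne : C.Nonempty) (hCcpt : IsCompact C)
    (Φ : H → EuclideanSpace ℝ (Fin m) → Y)
    (hΦ : Continuous fun q : H × EuclideanSpace ℝ (Fin m) => Φ q.1 q.2)
    (h : H → ℝ) (hC1 : ContDiff ℝ 1 h)
    (hscal : ∀ v ∈ C, ConvexOn ℝ Set.univ
      (fun q : H × EuclideanSpace ℝ (Fin m) => v (Φ q.1 q.2) + h q.1))
    (S : H → EuclideanSpace ℝ (Fin m) → ℝ)
    (hS : ∀ x z, S x z = ⨆ v : C, ((v : WeakDual ℝ Y) (Φ x z) + h x))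
    (φ : H → ℝ)
    (hφ : ∀ x, φ x = (P {ω | S x (ξ ω) ≤ h x}).toReal)
    (φl : ℝ → H → ℝ)
    (hφl : ∀ lam x, φl lam x = (P {ω | moreauEnv2 S lam x (ξ ω) ≤ h x}).toReal)
    :
    ∀ lam : ℕ → ℝ, (∀ k, 0 < lam k) → Tendsto lam atTop (𝓝 0) →
    ∀ (x : ℕ → H) (x₀ : H), Tendsto x atTop (𝓝 x₀) →
      Filter.limsup (fun k => φl (lam k) (x k)) atTop ≤ φ x₀ := by
  intro lam hpos hlam x x₀ hx
  have hh : Continuous h := hC1.continuous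
  have : Nonempty C := hCne.to_subtype
  have hSsup : (fun q : H × EuclideanSpace ℝ (Fin m) => S q.1 q.2) =
      fun q => ⨆ v : C, ((v : WeakDual ℝ Y) (Φ q.1 q.2) + h q.1) := funext fun q => hS q.1 q.2
  have hbdd (q : H × EuclideanSpace ℝ (Fin m)) :
      BddAbove (Set.range fun v : C => (v : WeakDual ℝ Y) (Φ q.1 q.2) + h q.1) := by
    rw [← Set.image_eq_range (fun v : WeakDual ℝ Y => v (Φ q.1 q.2) + h q.1) C]
    exact (hCcpt.image ((WeakDual.eval_continuous _).add continuous_const)).bddAbove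
  have hlsc : LowerSemicontinuous fun q : H × EuclideanSpace ℝ (Fin m) => S q.1 q.2 := by
    rw [hSsup]
    exact lowerSemicontinuous_ciSup hbdd fun v => Continuous.lowerSemicontinuous <|
      ((map_continuous (v : WeakDual ℝ Y)).comp hΦ).add (hh.comp continuous_fst)
  have hconv : ConvexOn ℝ Set.univ fun q : H × EuclideanSpace ℝ (Fin m) => S q.1 q.2 := by
    rw [hSsup]
    exact convexOn_ciSup (fun v => hscal v v.2) fun q _ => hbdd q
  obtain ⟨ℓ, c, hmin⟩ := hconv.exists_continuousLinearMap_add_le hlsc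
  simp only [hφ, hφl]
  refine (limsup_toReal_measure_le_measure_limsup P fun k =>
    measurableSet_le ((measurable_moreauEnv2 hmin (hpos k) (x k)).comp hξ) measurable_const).trans
    (ENNReal.toReal_mono (measure_ne_top P _) (measure_mono fun ω hω => ?_))
  exact le_of_frequently_moreauEnv2_le hlsc hmin hpos hlam (hx.prodMk_nhds tendsto_const_nhds)
    ((hh.tendsto x₀).comp hx) (mem_limsup_iff_frequently_mem.1 hω)

/-- Theorem 3.1(b), strong convergence case: for any `λ_k → 0⁺` and `x_k → x` strongly,
`limsup_k φ_{λ_k}(x_k) ≤ φ(x)`. -/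
theorem stmt5
    {H Y : Type*} [NormedAddCommGroup H] [InnerProductSpace ℝ H] [CompleteSpace H]
    [SecondCountableTopology H]
    [NormedAddCommGroup Y] [NormedSpace ℝ Y] [CompleteSpace Y] {m : ℕ}
    {Ω : Type*} [MeasurableSpace Ω] (P : Measure Ω) [IsProbabilityMeasure P]
    (ξ : Ω → EuclideanSpace ℝ (Fin m)) (hξ : Measurable ξ)
    (hlaw : P.map ξ ≪ volume)
    (K : Set Y) (hKne : K.Nonempty) (hKcl : IsClosed K) (hKconv : Convex ℝ K)
    (hKcone : ∀ c : ℝ, 0 ≤ c → ∀ y ∈ K, c • y ∈ K)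
    (C : Set (WeakDual ℝ Y)) (hCne : C.Nonempty) (hCconv : Convex ℝ C) (hCcpt : IsCompact C)
    (hCgen : closure {w : WeakDual ℝ Y | ∃ c : ℝ, 0 ≤ c ∧ ∃ v ∈ C, w = c • v}
      = {w : WeakDual ℝ Y | ∀ y ∈ K, 0 ≤ w y})
    (Φ : H → EuclideanSpace ℝ (Fin m) → Y)
    (hΦ : Continuous fun q : H × EuclideanSpace ℝ (Fin m) => Φ q.1 q.2)
    (h : H → ℝ) (hconv : ConvexOn ℝ Set.univ h) (hC1 : ContDiff ℝ 1 h)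
    (hscal : ∀ v ∈ C, ConvexOn ℝ Set.univ
      (fun q : H × EuclideanSpace ℝ (Fin m) => v (Φ q.1 q.2) + h q.1))
    (S : H → EuclideanSpace ℝ (Fin m) → ℝ)
    (hS : ∀ x z, S x z = ⨆ v : C, ((v : WeakDual ℝ Y) (Φ x z) + h x))
    (φ : H → ℝ)
    (hφ : ∀ x, φ x = (P {ω | S x (ξ ω) ≤ h x}).toReal)
    (φl : ℝ → H → ℝ)
    (hφl : ∀ lam x, φl lam x = (P {ω | moreauEnv2 S lam x (ξ ω) ≤ h x}).toReal)
    :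
    ∀ lam : ℕ → ℝ, (∀ k, 0 < lam k) → Tendsto lam atTop (𝓝 0) →
    ∀ (x : ℕ → H) (x₀ : H), Tendsto x atTop (𝓝 x₀) →
      Filter.limsup (fun k => φl (lam k) (x k)) atTop ≤ φ x₀ :=
  stmt5_general P ξ hξ C hCne hCcpt Φ hΦ h hC1 hscal S hS φ hφ φl hφl
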